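/- For σ ∈ S_n and r dividing n, the size of the r-regular Ulam sphere of radius 1 centered at m_σ^r is |S(m_σ^r,1)| = 1 + (n−1)² − |D(m_σ^r)| − |E(m_σ^r)|, where D and E are the standard and alternating duplicate translocation sets. -/

import Mathlib

/-!
Write `m = m_σ^r`. A multipermutation `m_π^r` lies at distance at most one from `m` exactly
when the two share a common subsequence of length `n - 1`; since both take every value
equally often, `m_π^r` is then `m` with one entry deleted and reinserted elsewhere, so the
sphere is the image of `T_n` under `φ ↦ m · φ`. A translocation in `D(m)` can be shifted by
one position without changing `m · φ`, and one in `E(m)` has the same effect as a backward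
translocation, so the image is already attained on `T_n \ (D(m) ∪ E(m))`. On that set the
map is injective: evaluating `m · φ = m · ψ` at a well-chosen position either forces
`φ = ψ` or exhibits one of the coincidences that `D(m)` and `E(m)` exclude.
-/

namespace UlamPaper

/-- Underlying function of the translocation `φ(i,j)` (0-indexed). -/
def tf (i j k : ℕ) : ℕ :=
  if i ≤ j then (if k < i ∨ j < k then k else if k = j then i else k + 1)
  else (if k < j ∨ i < k then k else if k = j then i else k - 1)

theorem tf_lt {n i j k : ℕ} (hi : i < n) (hj : j < n) (hk : k < n) : tf i j k < n := by
  unfold tf; split_ifs <;> omega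

theorem tf_tf (i j k : ℕ) : tf j i (tf i j k) = k := by
  unfold tf; split_ifs <;> omega

/-- The translocation `φ(i,j)` as a permutation of `Fin n`: it deletes the entry in
position `i` and reinserts it at position `j`, shifting intermediate entries. -/
def transloc {n : ℕ} (i j : Fin n) : Equiv.Perm (Fin n) where
  toFun k := ⟨tf i.val j.val k.val, tf_lt i.isLt j.isLt k.isLt⟩
  invFun k := ⟨tf j.val i.val k.val, tf_lt j.isLt i.isLt k.isLt⟩
  left_inv k := Fin.ext (tf_tf i.val j.val k.val)
  right_inv k := Fin.ext (tf_tf j.val i.val k.val)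

/-- `IsTransloc φ` : `φ` is a translocation. -/
def IsTransloc {n : ℕ} (φ : Equiv.Perm (Fin n)) : Prop := ∃ i j : Fin n, φ = transloc i j

/-- Length of the longest common subsequence of two `n`-length sequences. -/
noncomputable def lcsLen {n : ℕ} {α : Type*} (u v : Fin n → α) : ℕ :=
  sSup {k | ∃ f g : Fin k → Fin n, StrictMono f ∧ StrictMono g ∧ ∀ p, u (f p) = v (g p)}

/-- The Ulam distance `d(σ,π) = n - ℓ(σ,π)`. -/
noncomputable def ulamDist {n : ℕ} (σ π : Equiv.Perm (Fin n)) : ℕ :=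
  n - lcsLen (⇑σ) (⇑π)

/-- The `r`-regular multipermutation `m_σ^r` (with values in `[1, n/r]`). -/
def mult {n : ℕ} (r : ℕ) (σ : Equiv.Perm (Fin n)) : Fin n → ℕ :=
  fun i => (σ i).val / r + 1

/-- The `r`-regular Ulam distance, expressed as `n - ℓ(m_σ^r, m_π^r)`. -/
noncomputable def multDist {n : ℕ} (r : ℕ) (σ π : Equiv.Perm (Fin n)) : ℕ :=
  n - lcsLen (mult r σ) (mult r π)

/-- The `r`-regular Ulam sphere of radius `t` centered at `m_σ^r`. -/
def multSphere {n : ℕ} (r : ℕ) (σ : Equiv.Perm (Fin n)) (t : ℕ) : Set (Fin n → ℕ) :=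
  {x | ∃ π : Equiv.Perm (Fin n), x = mult r π ∧ multDist r σ π ≤ t}


/-- `T_n`, the unique set of translocations: all `φ(i,j)` with `i − j ≠ 1`. -/
def Tset (n : ℕ) : Set (Equiv.Perm (Fin n)) :=
  {φ | ∃ i j : Fin n, i.val ≠ j.val + 1 ∧ φ = transloc i j}

/-- The standard duplicate translocation set `D(m)`: translocations
`φ(i,j) ∈ T_n \ {e}` with `m(i) = m(j)`, or `m(i) = m(i−1)` (and `i` not the first
index). -/
def Dset {n : ℕ} {α : Type*} (m : Fin n → α) : Set (Equiv.Perm (Fin n)) :=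
  {φ | ∃ i j : Fin n, i.val ≠ j.val + 1 ∧ φ ≠ 1 ∧ φ = transloc i j ∧
    (m i = m j ∨ (0 < i.val ∧
      m i = m ⟨i.val - 1, lt_of_le_of_lt (Nat.sub_le _ _) i.isLt⟩))}

/-- The alternating duplicate translocation set `E(m)`: translocations
`φ(i,j) ∈ T_n \ D(m)` with `i < j` such that for some `k ∈ [i, j−2]`,
`φ(j,k) ∈ T_n \ D(m)` and `m·φ(i,j) = m·φ(j,k)`. -/
def Eset {n : ℕ} {α : Type*} (m : Fin n → α) : Set (Equiv.Perm (Fin n)) :=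
  {φ | ∃ i j : Fin n, φ = transloc i j ∧ φ ∈ Tset n ∧ φ ∉ Dset m ∧ i < j ∧
    ∃ k : Fin n, i ≤ k ∧ k.val + 2 ≤ j.val ∧
      transloc j k ∈ Tset n ∧ transloc j k ∉ Dset m ∧
      m ∘ ⇑(transloc i j) = m ∘ ⇑(transloc j k)}

open Equiv

section Transloc

variable {n : ℕ}

theorem tf_inj {i j i' j' : ℕ} (hij : i ≠ j + 1) (hij' : i' ≠ j' + 1) (hne : i ≠ j)
    (hne' : i' ≠ j') (hj : tf i j j = tf i' j' j) (hj' : tf i j j' = tf i' j' j') :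
    i = i' ∧ j = j' := by
  unfold tf at hj hj'
  split_ifs at hj hj' <;> omega

theorem transloc_val (i j k : Fin n) : (transloc i j k : ℕ) = tf i j k := rfl

theorem exists_val_add_one_eq {i : Fin n} (h : 0 < i.val) : ∃ p : Fin n, p.val + 1 = i.val :=
  ⟨⟨i.val - 1, by omega⟩, Nat.sub_add_cancel h⟩

theorem transloc_self (i : Fin n) : transloc i i = 1 := by
  ext k
  simp only [transloc_val, Perm.one_apply]
  unfold tf; split_ifs <;> omega

theorem transloc_apply_right (i j : Fin n) : transloc i j j = i :=
  Fin.ext (by rw [transloc_val]; unfold tf; split_ifs <;> omega)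

theorem transloc_apply_of_lt_of_lt {i j k : Fin n} (hi : k.val < i.val) (hj : k.val < j.val) :
    transloc i j k = k :=
  Fin.ext (by rw [transloc_val]; unfold tf; split_ifs <;> omega)

theorem transloc_apply_of_gt_of_gt {i j k : Fin n} (hi : i.val < k.val) (hj : j.val < k.val) :
    transloc i j k = k :=
  Fin.ext (by rw [transloc_val]; unfold tf; split_ifs <;> omega)

theorem transloc_apply_of_le_of_lt {i j k k' : Fin n} (hi : i.val ≤ k.val) (hj : k.val < j.val)
    (hk : k'.val = k.val + 1) : transloc i j k = k' :=
  Fin.ext (by rw [transloc_val]; unfold tf; split_ifs <;> omega)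

theorem transloc_apply_of_lt_of_le {i j k k' : Fin n} (hj : j.val < k.val) (hi : k.val ≤ i.val)
    (hk : k'.val + 1 = k.val) : transloc i j k = k' :=
  Fin.ext (by rw [transloc_val]; unfold tf; split_ifs <;> omega)

theorem transloc_ne_one {i j : Fin n} (h : i ≠ j) : transloc i j ≠ 1 := fun h1 =>
  h (by simpa [h1] using (transloc_apply_right i j).symm)

theorem transloc_comm_of_val_eq_succ {i j : Fin n} (h : i.val = j.val + 1) :
    transloc i j = transloc j i := by
  ext k
  simp only [transloc_val]
  unfold tf; split_ifs <;> omega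

theorem transloc_inj {i j i' j' : Fin n} (hv : i.val ≠ j.val + 1) (hv' : i'.val ≠ j'.val + 1)
    (hne : i ≠ j) (hne' : i' ≠ j') (h : transloc i j = transloc i' j') : i = i' ∧ j = j' := by
  have := tf_inj hv hv' (Fin.val_ne_of_ne hne) (Fin.val_ne_of_ne hne')
    (congrArg (fun φ : Perm (Fin n) => (φ j).val) h)
    (congrArg (fun φ : Perm (Fin n) => (φ j').val) h)
  exact ⟨Fin.ext this.1, Fin.ext this.2⟩

theorem transloc_eq_swap_mul_of_lt {i j q : Fin n} (h : i.val < j.val) (hq : q.val + 1 = j.val) :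
    transloc i j = swap i j * transloc i q := by
  ext k
  rw [Perm.mul_apply, swap_apply_def]
  split_ifs <;> simp only [Fin.ext_iff, transloc_val] at * <;> unfold tf at * <;>
    split_ifs at * <;> omega

theorem transloc_eq_swap_mul_of_gt {i j q : Fin n} (h : j.val < i.val) (hq : q.val = j.val + 1) :
    transloc i j = swap i j * transloc i q := by
  ext k
  rw [Perm.mul_apply, swap_apply_def]
  split_ifs <;> simp only [Fin.ext_iff, transloc_val] at * <;> unfold tf at * <;>
    split_ifs at * <;> omega

theorem transloc_eq_swap_mul_of_pred {i p : Fin n} (hp : p.val + 1 = i.val) (j : Fin n) :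
    transloc i j = swap i p * transloc p j := by
  ext k
  rw [Perm.mul_apply, swap_apply_def]
  split_ifs <;> simp only [Fin.ext_iff, transloc_val] at * <;> unfold tf at * <;>
    split_ifs at * <;> omega

theorem transloc_succAbove {k : ℕ} (i j : Fin (k + 1)) (p : Fin k) :
    transloc i j (j.succAbove p) = i.succAbove p := by
  simp only [Fin.ext_iff, transloc_val, Fin.succAbove, Fin.lt_def]
  split_ifs <;> simp only [Fin.val_castSucc, Fin.val_succ] at * <;> unfold tf <;>
    split_ifs <;> omega

end Transloc

section TranslocSets

variable {n : ℕ} {α : Type*} {m : Fin n → α}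

theorem transloc_mem_Tset {i j : Fin n} (h : i.val ≠ j.val + 1) : transloc i j ∈ Tset n :=
  ⟨i, j, h, rfl⟩

theorem Dset_subset_Tset (m : Fin n → α) : Dset m ⊆ Tset n := by
  rintro φ ⟨i, j, hv, -, rfl, -⟩
  exact transloc_mem_Tset hv

theorem Eset_subset_Tset (m : Fin n → α) : Eset m ⊆ Tset n := by
  rintro φ ⟨i, j, rfl, hT, -⟩
  exact hT

theorem disjoint_Dset_Eset (m : Fin n → α) : Disjoint (Dset m) (Eset m) :=
  Set.disjoint_left.mpr fun _ hD ⟨_, _, _, _, hD', _⟩ => hD' hD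

theorem one_notMem_Dset : (1 : Perm (Fin n)) ∉ Dset m := fun ⟨_, _, _, h1, _⟩ => h1 rfl

theorem transloc_mem_Dset_iff {i j : Fin n} (hv : i.val ≠ j.val + 1) (hne : i ≠ j) :
    transloc i j ∈ Dset m ↔ m i = m j ∨ ∃ p : Fin n, p.val + 1 = i.val ∧ m i = m p := by
  constructor
  · rintro ⟨a, b, hv', h1, hab, hm⟩
    have hab' : a ≠ b := fun h => h1 (by rw [hab, h, transloc_self])
    obtain ⟨rfl, rfl⟩ := transloc_inj hv hv' hne hab' hab
    exact hm.imp_right fun ⟨hpos, hp⟩ => ⟨_, Nat.sub_add_cancel hpos, hp⟩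
  · rintro (hm | ⟨p, hp, hm⟩)
    · exact ⟨i, j, hv, transloc_ne_one hne, rfl, .inl hm⟩
    · refine ⟨i, j, hv, transloc_ne_one hne, rfl, .inr ⟨by omega, ?_⟩⟩
      convert hm using 2
      exact Fin.ext (Nat.eq_sub_of_add_eq hp).symm

theorem transloc_mem_Eset {i j k : Fin n} (hij : i < j) (hik : i ≤ k) (hkj : k.val + 2 ≤ j.val)
    (hD : transloc i j ∉ Dset m) (hD' : transloc j k ∉ Dset m)
    (heq : m ∘ transloc i j = m ∘ transloc j k) : transloc i j ∈ Eset m :=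
  ⟨i, j, rfl, transloc_mem_Tset (by omega), hD, hij, k, hik, hkj, transloc_mem_Tset (by omega),
    hD', heq⟩

theorem exists_of_transloc_mem_Eset {i j : Fin n} (hv : i.val ≠ j.val + 1) (hne : i ≠ j)
    (h : transloc i j ∈ Eset m) :
    ∃ k : Fin n, k.val + 2 ≤ j.val ∧ transloc j k ∉ Dset m ∧
      m ∘ transloc i j = m ∘ transloc j k := by
  obtain ⟨a, b, hab, -, -, hlt, k, -, hkb, -, hD, heq⟩ := h
  obtain ⟨rfl, rfl⟩ := transloc_inj hv (by omega) hne hlt.ne hab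
  exact ⟨k, hkb, hD, heq⟩

theorem transloc_notMem_Eset_of_succ_lt {i j : Fin n} (h : j.val + 1 < i.val) :
    transloc i j ∉ Eset m := by
  rintro ⟨a, b, hab, -, -, hlt, -⟩
  obtain ⟨rfl, rfl⟩ := transloc_inj (by omega) (by omega) (by omega) hlt.ne hab
  omega

end TranslocSets

section Reduction

variable {n : ℕ} {α : Type*}

theorem comp_swap_mul {m : Fin n → α} {a b : Fin n} (h : m a = m b) (φ : Perm (Fin n)) :
    m ∘ ⇑(swap a b * φ) = m ∘ ⇑φ := by
  funext k
  simp only [Function.comp_apply, Perm.mul_apply, swap_apply_def]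
  split_ifs with ha hb
  · rw [ha, h]
  · rw [hb, h]
  · rfl

/-- Each duplicate condition lets one move `i` or `j` by one step without changing
`m · φ(i,j)`, and every such move decreases `2 i + |i - j|`. -/
theorem exists_mem_Tset_diff_comp_eq (m : Fin n → α) (i j : Fin n) :
    ∃ ψ ∈ Tset n \ (Dset m ∪ Eset m), m ∘ transloc i j = m ∘ ψ := by
  by_cases hij : i = j
  · subst hij
    refine ⟨transloc i i, ⟨transloc_mem_Tset (by omega), ?_⟩, rfl⟩
    rw [transloc_self]
    rintro (h | ⟨a, b, hab, -, -, hlt, -⟩)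
    · exact one_notMem_Dset h
    · exact transloc_ne_one hlt.ne hab.symm
  by_cases hadj : i.val = j.val + 1
  · rw [transloc_comm_of_val_eq_succ hadj]
    exact exists_mem_Tset_diff_comp_eq m j i
  by_cases hm : m i = m j
  · rcases Nat.lt_or_gt_of_ne (Fin.val_ne_of_ne hij) with hlt | hlt
    · rw [transloc_eq_swap_mul_of_lt (q := ⟨j.val - 1, by omega⟩) hlt (by simp only; omega),
        comp_swap_mul hm]
      exact exists_mem_Tset_diff_comp_eq m i _
    · rw [transloc_eq_swap_mul_of_gt (q := ⟨j.val + 1, by omega⟩) hlt rfl, comp_swap_mul hm]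
      exact exists_mem_Tset_diff_comp_eq m i _
  by_cases hpred : ∃ p : Fin n, p.val + 1 = i.val ∧ m i = m p
  · obtain ⟨p, hp, hmp⟩ := hpred
    rw [transloc_eq_swap_mul_of_pred hp j, comp_swap_mul hmp]
    exact exists_mem_Tset_diff_comp_eq m p j
  have hD : transloc i j ∉ Dset m := by
    rw [transloc_mem_Dset_iff hadj hij]
    exact not_or.mpr ⟨hm, hpred⟩
  by_cases hE : transloc i j ∈ Eset m
  · obtain ⟨k, hkj, hD', heq⟩ := exists_of_transloc_mem_Eset hadj hij hE
    exact ⟨transloc j k, ⟨transloc_mem_Tset (by omega),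
      not_or.mpr ⟨hD', transloc_notMem_Eset_of_succ_lt (by omega)⟩⟩, heq⟩
  · exact ⟨transloc i j, ⟨transloc_mem_Tset hadj, not_or.mpr ⟨hD, hE⟩⟩, rfl⟩
termination_by 2 * i.val + (i.val - j.val) + (j.val - i.val)
decreasing_by all_goals omega

end Reduction

section Injectivity

variable {n : ℕ} {α : Type*} {m : Fin n → α} {i j i' j' : Fin n}

theorem apply_ne_of_transloc_notMem_Dset (hv : i.val ≠ j.val + 1) (hne : i ≠ j)
    (hD : transloc i j ∉ Dset m) :
    m i ≠ m j ∧ ∀ p : Fin n, p.val + 1 = i.val → m i ≠ m p := by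
  rw [transloc_mem_Dset_iff hv hne, not_or, not_exists] at hD
  exact ⟨hD.1, fun p hp h => hD.2 p ⟨hp, h⟩⟩

theorem apply_eq_apply_of_comp_eq {φ ψ : Perm (Fin n)} (h : m ∘ φ = m ∘ ψ) {k a b : Fin n}
    (ha : φ k = a) (hb : ψ k = b) : m a = m b :=
  ha ▸ hb ▸ congrFun h k

theorem eq_of_comp_transloc_eq_of_lt_of_lt (hij : i.val < j.val) (hij' : i'.val < j'.val)
    (hm : m i ≠ m j) (hm' : m i' ≠ m j')
    (hpred : ∀ p : Fin n, p.val + 1 = i.val → m i ≠ m p)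
    (hpred' : ∀ p : Fin n, p.val + 1 = i'.val → m i' ≠ m p)
    (heq : m ∘ transloc i j = m ∘ transloc i' j') : i = i' ∧ j = j' := by
  rcases lt_trichotomy j.val j'.val with hjj | hjj | hjj
  · exact (hm' (apply_eq_apply_of_comp_eq heq (transloc_apply_of_gt_of_gt (by omega) hjj)
      (transloc_apply_right _ _)).symm).elim
  · obtain rfl : j = j' := Fin.ext hjj
    rcases lt_trichotomy i.val i'.val with hii | hii | hii
    · obtain ⟨p, hp⟩ := exists_val_add_one_eq (i := i') (by omega)
      exact (hpred' p hp (apply_eq_apply_of_comp_eq heq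
        (transloc_apply_of_le_of_lt (by omega) (by omega) hp.symm)
        (transloc_apply_of_lt_of_lt (by omega) (by omega)))).elim
    · exact ⟨Fin.ext hii, rfl⟩
    · obtain ⟨p, hp⟩ := exists_val_add_one_eq (i := i) (by omega)
      exact (hpred p hp (apply_eq_apply_of_comp_eq heq
        (transloc_apply_of_lt_of_lt (by omega) (by omega))
        (transloc_apply_of_le_of_lt (by omega) (by omega) hp.symm)).symm).elim
  · exact (hm (apply_eq_apply_of_comp_eq heq (transloc_apply_right _ _)
      (transloc_apply_of_gt_of_gt (by omega) hjj))).elim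

theorem eq_of_comp_transloc_eq_of_gt_of_gt (hij : j.val + 1 < i.val) (hij' : j'.val + 1 < i'.val)
    (hm : m i ≠ m j) (hm' : m i' ≠ m j')
    (hpred : ∀ p : Fin n, p.val + 1 = i.val → m i ≠ m p)
    (hpred' : ∀ p : Fin n, p.val + 1 = i'.val → m i' ≠ m p)
    (heq : m ∘ transloc i j = m ∘ transloc i' j') : i = i' ∧ j = j' := by
  rcases lt_trichotomy j.val j'.val with hjj | hjj | hjj
  · exact (hm (apply_eq_apply_of_comp_eq heq (transloc_apply_right _ _)
      (transloc_apply_of_lt_of_lt (by omega) hjj))).elim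
  · obtain rfl : j = j' := Fin.ext hjj
    rcases lt_trichotomy i.val i'.val with hii | hii | hii
    · obtain ⟨p, hp⟩ := exists_val_add_one_eq (i := i') (by omega)
      exact (hpred' p hp (apply_eq_apply_of_comp_eq heq
        (transloc_apply_of_gt_of_gt hii (by omega))
        (transloc_apply_of_lt_of_le (by omega) le_rfl hp))).elim
    · exact ⟨Fin.ext hii, rfl⟩
    · obtain ⟨p, hp⟩ := exists_val_add_one_eq (i := i) (by omega)
      exact (hpred p hp (apply_eq_apply_of_comp_eq heq
        (transloc_apply_of_lt_of_le (by omega) le_rfl hp)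
        (transloc_apply_of_gt_of_gt hii (by omega))).symm).elim
  · exact (hm' (apply_eq_apply_of_comp_eq heq (transloc_apply_of_lt_of_lt (by omega) hjj)
      (transloc_apply_right _ _)).symm).elim

/-- A forward and a backward translocation can only have the same effect in the alternating
configuration `i ≤ j' < j = i'` that `E(m)` describes. -/
theorem transloc_mem_Eset_of_comp_eq (hij : i.val < j.val) (hij' : j'.val + 1 < i'.val)
    (hm : m i ≠ m j) (hm' : m i' ≠ m j')
    (hpred' : ∀ p : Fin n, p.val + 1 = i'.val → m i' ≠ m p)
    (hD : transloc i j ∉ Dset m) (hD' : transloc i' j' ∉ Dset m)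
    (heq : m ∘ transloc i j = m ∘ transloc i' j') : transloc i j ∈ Eset m := by
  have hj'j : j'.val ≤ j.val := by
    by_contra! h
    exact hm (apply_eq_apply_of_comp_eq heq (transloc_apply_right _ _)
      (transloc_apply_of_lt_of_lt (by omega) h))
  have hij' : i.val ≤ j'.val := by
    by_contra! h
    exact hm' (apply_eq_apply_of_comp_eq heq (transloc_apply_of_lt_of_lt h (by omega))
      (transloc_apply_right _ _)).symm
  have hji' : j.val ≤ i'.val := by
    by_contra! h
    exact hm (apply_eq_apply_of_comp_eq heq (transloc_apply_right _ _)
      (transloc_apply_of_gt_of_gt h (by omega)))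
  obtain rfl : i' = j := by
    refine Fin.ext (le_antisymm ?_ hji')
    by_contra! h
    obtain ⟨p, hp⟩ := exists_val_add_one_eq (i := i') (by omega)
    exact hpred' p hp (apply_eq_apply_of_comp_eq heq (transloc_apply_of_gt_of_gt (by omega) h)
      (transloc_apply_of_lt_of_le (by omega) le_rfl hp))
  exact transloc_mem_Eset hij hij' (by omega) hD hD' heq

theorem transloc_eq_of_comp_eq (hv : i.val ≠ j.val + 1) (hv' : i'.val ≠ j'.val + 1)
    (hD : transloc i j ∉ Dset m) (hD' : transloc i' j' ∉ Dset m)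
    (hE : transloc i j ∉ Eset m) (hE' : transloc i' j' ∉ Eset m)
    (heq : m ∘ transloc i j = m ∘ transloc i' j') : transloc i j = transloc i' j' := by
  rcases eq_or_ne i j with rfl | hij <;> rcases eq_or_ne i' j' with rfl | hij'
  · rw [transloc_self, transloc_self]
  · obtain ⟨hm', -⟩ := apply_ne_of_transloc_notMem_Dset hv' hij' hD'
    exact (hm' (apply_eq_apply_of_comp_eq heq (by rw [transloc_self]; rfl)
      (transloc_apply_right _ _)).symm).elim
  · obtain ⟨hm, -⟩ := apply_ne_of_transloc_notMem_Dset hv hij hD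
    exact (hm (apply_eq_apply_of_comp_eq heq (transloc_apply_right _ _)
      (by rw [transloc_self]; rfl))).elim
  obtain ⟨hm, hpred⟩ := apply_ne_of_transloc_notMem_Dset hv hij hD
  obtain ⟨hm', hpred'⟩ := apply_ne_of_transloc_notMem_Dset hv' hij' hD'
  suffices i = i' ∧ j = j' by rw [this.1, this.2]
  rcases Nat.lt_or_gt_of_ne (Fin.val_ne_of_ne hij) with hf | hb <;>
    rcases Nat.lt_or_gt_of_ne (Fin.val_ne_of_ne hij') with hf' | hb'
  · exact eq_of_comp_transloc_eq_of_lt_of_lt hf hf' hm hm' hpred hpred' heq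
  · exact (hE (transloc_mem_Eset_of_comp_eq hf (by omega) hm hm' hpred' hD hD' heq)).elim
  · exact (hE' (transloc_mem_Eset_of_comp_eq hf' (by omega) hm' hm hpred hD' hD heq.symm)).elim
  · exact eq_of_comp_transloc_eq_of_gt_of_gt (by omega) (by omega) hm hm' hpred hpred' heq

theorem injOn_comp_Tset_diff (m : Fin n → α) :
    Set.InjOn (fun φ : Perm (Fin n) => m ∘ ⇑φ) (Tset n \ (Dset m ∪ Eset m)) := by
  rintro _ ⟨⟨i, j, hv, rfl⟩, hφ⟩ _ ⟨⟨i', j', hv', rfl⟩, hψ⟩ heq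
  rw [Set.mem_union, not_or] at hφ hψ
  exact transloc_eq_of_comp_eq hv hv' hφ.1 hψ.1 hφ.2 hψ.2 heq

end Injectivity

section Counting

variable {n : ℕ} {α : Type*}

theorem ncard_image_comp_Tset (m : Fin n → α) :
    ((fun φ : Perm (Fin n) => m ∘ ⇑φ) '' Tset n).ncard =
      (Tset n).ncard - (Dset m).ncard - (Eset m).ncard := by
  have himage : (fun φ : Perm (Fin n) => m ∘ ⇑φ) '' Tset n =
      (fun φ : Perm (Fin n) => m ∘ ⇑φ) '' (Tset n \ (Dset m ∪ Eset m)) := by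
    refine (Set.image_mono Set.sdiff_subset).antisymm' ?_
    rintro _ ⟨_, ⟨i, j, -, rfl⟩, rfl⟩
    obtain ⟨ψ, hψ, heq⟩ := exists_mem_Tset_diff_comp_eq m i j
    exact ⟨ψ, hψ, heq.symm⟩
  rw [himage, (injOn_comp_Tset_diff m).ncard_image,
    Set.ncard_sdiff (Set.union_subset (Dset_subset_Tset m) (Eset_subset_Tset m)),
    Set.ncard_union_eq (disjoint_Dset_Eset m), Nat.sub_sub]

/-- The pairs `(i, j)` with `i ≠ j` and `i ≠ j + 1`, enumerated by `Fin k × Fin k`: a pair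
`a ≤ b` gives the forward pair `(a, b + 1)`, a pair `b < a` the backward pair `(a + 1, b)`. -/
def translocPair {k : ℕ} (p : Fin k × Fin k) : Fin (k + 1) × Fin (k + 1) :=
  if p.1 ≤ p.2 then (p.1.castSucc, p.2.succ) else (p.1.succ, p.2.castSucc)

theorem translocPair_injective (k : ℕ) : Function.Injective (translocPair (k := k)) := by
  rintro ⟨a, b⟩ ⟨c, d⟩ h
  simp only [translocPair] at h
  split_ifs at h <;>
    simp only [Prod.mk.injEq, Fin.ext_iff, Fin.val_castSucc, Fin.val_succ] at h ⊢ <;> omega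

theorem translocPair_ne {k : ℕ} (p : Fin k × Fin k) :
    (translocPair p).1 ≠ (translocPair p).2 ∧
      (translocPair p).1.val ≠ (translocPair p).2.val + 1 := by
  simp only [translocPair]
  split_ifs <;> simp only [ne_eq, Fin.ext_iff, Fin.val_castSucc, Fin.val_succ] <;> omega

theorem exists_translocPair_eq {k : ℕ} {i j : Fin (k + 1)} (hne : i ≠ j)
    (hv : i.val ≠ j.val + 1) : ∃ p, translocPair p = (i, j) := by
  rcases Nat.lt_or_gt_of_ne (Fin.val_ne_of_ne hne) with h | h
  · refine ⟨(⟨i.val, by omega⟩, ⟨j.val - 1, by omega⟩), ?_⟩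
    rw [translocPair, if_pos (by simp only [Fin.mk_le_mk]; omega)]
    simp only [Prod.mk.injEq, Fin.ext_iff, Fin.val_castSucc, Fin.val_succ, true_and]
    omega
  · refine ⟨(⟨i.val - 1, by omega⟩, ⟨j.val, by omega⟩), ?_⟩
    rw [translocPair, if_neg (by simp only [Fin.mk_le_mk]; omega)]
    simp only [Prod.mk.injEq, Fin.ext_iff, Fin.val_castSucc, Fin.val_succ, and_true]
    omega

theorem Tset_succ_eq (k : ℕ) :
    Tset (k + 1) = insert 1 (Set.range fun p : Fin k × Fin k =>
      transloc (translocPair p).1 (translocPair p).2) := by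
  ext φ
  constructor
  · rintro ⟨i, j, hv, rfl⟩
    rcases eq_or_ne i j with rfl | hne
    · exact .inl (transloc_self i)
    · obtain ⟨p, hp⟩ := exists_translocPair_eq hne hv
      exact .inr ⟨p, by simp only [hp]⟩
  · rintro (rfl | ⟨p, rfl⟩)
    · exact ⟨0, 0, by simp, (transloc_self 0).symm⟩
    · exact transloc_mem_Tset (translocPair_ne p).2

theorem Tset_ncard (k : ℕ) : (Tset (k + 1)).ncard = 1 + k ^ 2 := by
  have hinj : Function.Injective fun p : Fin k × Fin k =>
      transloc (translocPair p).1 (translocPair p).2 := fun p q h =>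
    translocPair_injective k (Prod.ext_iff.mpr (transloc_inj (translocPair_ne p).2
      (translocPair_ne q).2 (translocPair_ne p).1 (translocPair_ne q).1 h))
  have hone : (1 : Perm (Fin (k + 1))) ∉ Set.range fun p : Fin k × Fin k =>
      transloc (translocPair p).1 (translocPair p).2 :=
    fun ⟨p, hp⟩ => transloc_ne_one (translocPair_ne p).1 hp
  rw [Tset_succ_eq, Set.ncard_insert_of_notMem hone, Set.ncard_range_of_injective hinj,
    Nat.card_eq_fintype_card, Fintype.card_prod, Fintype.card_fin, sq, add_comm]

end Counting

section Sphere

variable {n : ℕ} {α : Type*}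

theorem bddAbove_lcs (u v : Fin n → α) :
    BddAbove
      {k | ∃ f g : Fin k → Fin n, StrictMono f ∧ StrictMono g ∧ ∀ p, u (f p) = v (g p)} :=
  ⟨n, fun k ⟨f, _, hf, _⟩ => by simpa using Fintype.card_le_of_injective f hf.injective⟩

theorem le_lcsLen {u v : Fin n → α} {k : ℕ} {f g : Fin k → Fin n} (hf : StrictMono f)
    (hg : StrictMono g) (h : ∀ p, u (f p) = v (g p)) : k ≤ lcsLen u v :=
  le_csSup (bddAbove_lcs u v) ⟨f, g, hf, hg, h⟩

theorem exists_strictMono_of_le_lcsLen {u v : Fin n → α} {k : ℕ} (hk : k ≤ lcsLen u v) :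
    ∃ f g : Fin k → Fin n, StrictMono f ∧ StrictMono g ∧ ∀ p, u (f p) = v (g p) := by
  obtain ⟨f, g, hf, hg, h⟩ := Nat.sSup_mem
    (by exact ⟨0, Fin.elim0, Fin.elim0, fun p => p.elim0, fun p => p.elim0, fun p => p.elim0⟩)
    (bddAbove_lcs u v)
  exact ⟨f ∘ Fin.castLE hk, g ∘ Fin.castLE hk, hf.comp (Fin.strictMono_castLE hk),
    hg.comp (Fin.strictMono_castLE hk), fun p => h _⟩

theorem eq_succAbove_of_strictMono {k : ℕ} {f : Fin k → Fin (k + 1)} (hf : StrictMono f) :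
    ∃ a : Fin (k + 1), f = a.succAbove := by
  classical
  have hcard : (Finset.univ.image f).card = k := by
    rw [Finset.card_image_of_injective _ hf.injective, Finset.card_univ, Fintype.card_fin]
  obtain ⟨a, ha⟩ : ∃ a, (Finset.univ.image f)ᶜ = {a} := by
    rw [← Finset.card_eq_one, Finset.card_compl, hcard, Fintype.card_fin, Nat.add_sub_cancel_left]
  have him : ({a}ᶜ : Finset (Fin (k + 1))) = Finset.univ.image f := by rw [← ha, compl_compl]
  have hs : ({a}ᶜ : Finset (Fin (k + 1))).card = k := by rw [him, hcard]
  refine ⟨a, ?_⟩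
  rw [Finset.orderEmbOfFin_unique hs (f := f) (fun x => by simp [him]) hf,
    Finset.orderEmbOfFin_unique hs (f := a.succAbove) (fun x => by simp [Fin.succAbove_ne])
      (Fin.strictMono_succAbove a)]

theorem le_lcsLen_comp_transloc {k : ℕ} (m : Fin (k + 1) → α) (i j : Fin (k + 1)) :
    k ≤ lcsLen m (m ∘ transloc i j) :=
  le_lcsLen (Fin.strictMono_succAbove i) (Fin.strictMono_succAbove j) fun p => by
    rw [Function.comp_apply, transloc_succAbove]

theorem map_univ_val_eq_cons {k : ℕ} (w : Fin (k + 1) → α) (c : Fin (k + 1)) :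
    Finset.univ.val.map w = w c ::ₘ Finset.univ.val.map (w ∘ c.succAbove) := by
  rw [Fin.univ_succAbove k c, Finset.cons_val, Finset.map_val, Multiset.map_cons,
    Multiset.map_map]
  rfl

theorem eq_comp_transloc_of_comp_succAbove_eq {k : ℕ} {u v : Fin (k + 1) → α}
    (hval : Finset.univ.val.map u = Finset.univ.val.map v) {a b : Fin (k + 1)}
    (h : u ∘ a.succAbove = v ∘ b.succAbove) : v = u ∘ transloc a b := by
  have hab : v b = u a := by
    rw [map_univ_val_eq_cons u a, map_univ_val_eq_cons v b, h] at hval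
    exact ((Multiset.cons_inj_left _).mp hval).symm
  funext x
  obtain rfl | ⟨p, rfl⟩ := Fin.eq_self_or_eq_succAbove b x
  · rw [Function.comp_apply, transloc_apply_right, hab]
  · rw [Function.comp_apply, transloc_succAbove, ← Function.comp_apply (f := u), h,
      Function.comp_apply]

theorem map_univ_val_mult (r : ℕ) (σ : Perm (Fin n)) :
    Finset.univ.val.map (mult r σ) = Finset.univ.val.map fun t : Fin n => t.val / r + 1 := by
  rw [show mult r σ = (fun t : Fin n => t.val / r + 1) ∘ σ from rfl, ← Multiset.map_map,
    Multiset.map_univ_val_equiv]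

theorem multSphere_one_eq_image {k : ℕ} (r : ℕ) (σ : Perm (Fin (k + 1))) :
    multSphere r σ 1 = (fun φ : Perm (Fin (k + 1)) => mult r σ ∘ ⇑φ) '' Tset (k + 1) := by
  ext x
  constructor
  · rintro ⟨π, rfl, hd⟩
    obtain ⟨f, g, hf, hg, hfg⟩ :=
      exists_strictMono_of_le_lcsLen (u := mult r σ) (v := mult r π) (k := k)
        (by unfold multDist at hd; omega)
    obtain ⟨a, rfl⟩ := eq_succAbove_of_strictMono hf
    obtain ⟨b, rfl⟩ := eq_succAbove_of_strictMono hg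
    have hπ := eq_comp_transloc_of_comp_succAbove_eq
      ((map_univ_val_mult r σ).trans (map_univ_val_mult r π).symm) (funext hfg)
    rcases eq_or_ne a.val (b.val + 1) with hadj | hv
    · exact ⟨transloc b a, transloc_mem_Tset (by omega),
        by rw [hπ, transloc_comm_of_val_eq_succ hadj]⟩
    · exact ⟨transloc a b, transloc_mem_Tset hv, hπ.symm⟩
  · rintro ⟨_, ⟨i, j, -, rfl⟩, rfl⟩
    refine ⟨σ * transloc i j, rfl, ?_⟩
    have := le_lcsLen_comp_transloc (mult r σ) i j
    change k + 1 - lcsLen (mult r σ) (mult r σ ∘ transloc i j) ≤ 1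
    omega

end Sphere

theorem multSphere_one_card_eq_general {n r : ℕ} (hn : 0 < n)
    (σ : Equiv.Perm (Fin n)) :
    (multSphere r σ 1).ncard =
      1 + (n - 1) ^ 2 - (Dset (mult r σ)).ncard - (Eset (mult r σ)).ncard := by
  obtain ⟨k, rfl⟩ := Nat.exists_eq_add_one_of_ne_zero hn.ne'
  rw [multSphere_one_eq_image, ncard_image_comp_Tset, Tset_ncard, Nat.add_sub_cancel]

/-- `|S(m_σ^r, 1)| = 1 + (n−1)² − |D(m_σ^r)| − |E(m_σ^r)|`. -/
theorem multSphere_one_card_eq {n r : ℕ} (hn : 0 < n) (hr : 0 < r) (hdvd : r ∣ n)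
    (σ : Equiv.Perm (Fin n)) :
    (multSphere r σ 1).ncard =
      1 + (n - 1) ^ 2 - (Dset (mult r σ)).ncard - (Eset (mult r σ)).ncard :=
  multSphere_one_card_eq_general hn σ

end UlamPaper
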